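/- arXiv:2510.17981 — 2 statements merged into one kernel-verified Lean document; each statement's English description precedes it below -/
import Mathlib

section
/- Let G be a graph containing no cycle of length 2ℓ+1, let v be a vertex of G, and let i ∈ {1, ..., ℓ}. Then the subgraph of G induced on N^i(v), the set of vertices at distance exactly i from v, has chromatic number at most 2ℓ-1. -/
/-!
Fix a breadth-first search tree rooted at `v`, and for `x` in the layer `N^i(v)` let `π x` be
its ancestor in `N^1(v)`. Let `S ⊆ N^i(v)` be finite with minimum degree at least `2ℓ - 1`.
A path in `S` of length `t = 2(ℓ - i) + 1` whose ends have different `π` closes up, through the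
two tree branches, to a cycle of length `2ℓ + 1`; so `π` agrees at the ends of such paths.
When `i = 1`, `π` is the identity, which a greedy path of length `t` in `S` contradicts.
When `i ≥ 2`, greedy paths in `S` (now `t + 1 ≤ 2ℓ - 1`) show that `π` agrees at the ends of
every walk of length two, hence, `t` being odd, along every edge of `S`; a class of `π` is then
a set of the same kind in the layer `N^(i-1)(π x)`, and induction on `i` applies. So every
finite subset of the layer has a vertex of degree below `2ℓ - 1`: greedy colouring handles
finite subgraphs and compactness the rest.
-/

open SimpleGraph

open Finset

theorem Function.iterate_eq_iterate_of_le {α : Type*} {f : α → α} {x y : α} {k m : ℕ}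
    (h : f^[k] x = f^[k] y) (hkm : k ≤ m) : f^[m] x = f^[m] y := by
  obtain ⟨d, rfl⟩ := Nat.exists_eq_add_of_le hkm
  rw [add_comm, Function.iterate_add_apply, Function.iterate_add_apply, h]

namespace SimpleGraph

variable {V : Type*} {G : SimpleGraph V} {u v w x y z : V} {k n : ℕ}

theorem Walk.IsPath.start_notMem_support_tail {p : G.Walk u v} (hp : p.IsPath) :
    u ∉ p.support.tail := by
  have := hp.support_nodup
  rw [← p.cons_tail_support, List.nodup_cons] at this
  exact this.1

theorem exists_adj_dist_add_one_eq (h : G.dist v u ≠ 0) :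
    ∃ z, G.Adj u z ∧ G.dist v z + 1 = G.dist v u := by
  have h' : G.dist u v ≠ 0 := by rwa [dist_comm]
  obtain ⟨p, hp⟩ := exists_walk_of_dist_ne_zero h'
  cases p with
  | nil => simp at h'
  | cons hadj q =>
    have hq := dist_le q
    rw [Walk.length_cons, dist_comm] at hp
    rw [dist_comm] at hq
    exact ⟨_, hadj, by rcases hadj.diff_dist_adj (u := v) with h | h | h <;> omega⟩

open scoped Classical in
/-- The parent of `u` in a breadth-first search tree rooted at `v`: a neighbour of `u` one step
closer to `v` when `u ≠ v` is reachable from `v`, and `u` itself otherwise. -/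
noncomputable def bfsParent (G : SimpleGraph V) (v u : V) : V :=
  if h : ∃ z, G.Adj u z ∧ G.dist v z + 1 = G.dist v u then h.choose else u

theorem adj_bfsParent (h : G.dist v u ≠ 0) : G.Adj u (G.bfsParent v u) := by
  rw [bfsParent, dif_pos (exists_adj_dist_add_one_eq h)]
  exact (exists_adj_dist_add_one_eq h).choose_spec.1

theorem dist_bfsParent_add_one (h : G.dist v u ≠ 0) :
    G.dist v (G.bfsParent v u) + 1 = G.dist v u := by
  rw [bfsParent, dif_pos (exists_adj_dist_add_one_eq h)]
  exact (exists_adj_dist_add_one_eq h).choose_spec.2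

theorem dist_bfsParent_iterate (hk : k ≤ G.dist v u) :
    G.dist v ((G.bfsParent v)^[k] u) = G.dist v u - k := by
  induction k with
  | zero => rfl
  | succ k ih =>
    have hk' := ih (by omega)
    rw [Function.iterate_succ_apply']
    have := dist_bfsParent_add_one (G := G) (v := v) (u := (G.bfsParent v)^[k] u) (by omega)
    omega

theorem adj_bfsParent_iterate (hk : k < G.dist v u) :
    G.Adj ((G.bfsParent v)^[k] u) ((G.bfsParent v)^[k + 1] u) := by
  rw [Function.iterate_succ_apply']
  exact adj_bfsParent (by rw [dist_bfsParent_iterate hk.le]; omega)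

theorem dist_bfsParent_iterate_le (hk : k ≤ G.dist v u) :
    G.dist ((G.bfsParent v)^[k] u) u ≤ k := by
  induction k with
  | zero => simp
  | succ k ih =>
    have hadj := (adj_bfsParent_iterate (G := G) (v := v) (u := u) (k := k) (by omega)).symm
    have := hadj.reachable.dist_triangle_left u
    rw [dist_eq_one_iff_adj.mpr hadj] at this
    have := ih (by omega)
    omega

theorem dist_bfsParent_iterate_of_dist_eq_succ (h : G.dist v u = k + 1) :
    G.dist ((G.bfsParent v)^[k] u) u = k := by
  have hle := dist_bfsParent_iterate_le (G := G) (v := v) (u := u) (k := k) (by omega)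
  have h1 : G.dist v ((G.bfsParent v)^[k] u) = 1 := by
    rw [dist_bfsParent_iterate (by omega)]
    omega
  have := (dist_eq_one_iff_adj.mp h1).reachable.dist_triangle_left u
  omega

theorem exists_walk_support_bfsParent_iterate (hu : G.Reachable v u) :
    ∃ w : G.Walk v u, w.length = G.dist v u ∧
      ∀ z ∈ w.support, z = v ∨ ∃ k < G.dist v u, z = (G.bfsParent v)^[k] u := by
  obtain ⟨n, hn⟩ : ∃ n, G.dist v u = n := ⟨_, rfl⟩
  induction n generalizing u with
  | zero =>
    obtain rfl : v = u := hu.dist_eq_zero_iff.mp hn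
    exact ⟨.nil, by simp, by simp⟩
  | succ n ih =>
    have hadj := adj_bfsParent (G := G) (v := v) (u := u) (by omega)
    have hd := dist_bfsParent_add_one (G := G) (v := v) (u := u) (by omega)
    obtain ⟨w, hw, hwS⟩ := ih (hu.trans hadj.reachable) (by omega)
    refine ⟨w.concat hadj.symm, by simp [hw]; omega, fun z hz => ?_⟩
    rw [Walk.support_concat, List.mem_append, List.mem_singleton] at hz
    rcases hz with hz | rfl
    · rcases hwS z hz with rfl | ⟨k, hk, rfl⟩
      · exact .inl rfl
      · exact .inr ⟨k + 1, by omega, by rw [Function.iterate_succ_apply]⟩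
    · exact .inr ⟨0, by omega, rfl⟩

theorem Walk.eq_of_mem_support_of_length_eq_dist {w : G.Walk v x} (hw : w.length = G.dist v x)
    (hz : z ∈ w.support) (hzx : G.dist v z = G.dist v x) : z = x := by
  classical
  have hlen := congrArg Walk.length (w.take_spec hz)
  have := dist_le (w.takeUntil z hz)
  rw [Walk.length_append] at hlen
  exact Walk.eq_of_length_eq_zero (p := w.dropUntil z hz) (by omega)

theorem Walk.IsPath.append_of_length_eq_dist {w : G.Walk v x} (hw : w.length = G.dist v x)
    {p : G.Walk x y} (hp : p.IsPath) (hpS : ∀ z ∈ p.support, G.dist v z = G.dist v x) :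
    (w.append p).IsPath := by
  rw [Walk.isPath_def, Walk.support_append, List.nodup_append]
  refine ⟨(w.isPath_of_length_eq_dist hw).support_nodup,
    hp.support_nodup.sublist (List.tail_sublist _), ?_⟩
  rintro a ha b hb rfl
  obtain rfl := Walk.eq_of_mem_support_of_length_eq_dist hw ha (hpS a (List.mem_of_mem_tail hb))
  exact hp.start_notMem_support_tail hb

theorem exists_isCycle_of_isPath_of_dist_eq (hx : G.dist v x = n + 1) (hy : G.dist v y = n + 1)
    (hxy : (G.bfsParent v)^[n] x ≠ (G.bfsParent v)^[n] y) (p : G.Walk x y) (hp : p.IsPath)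
    (hpS : ∀ z ∈ p.support, G.dist v z = n + 1) :
    ∃ c : G.Walk v v, c.IsCycle ∧ c.length = 2 * (n + 1) + p.length := by
  obtain ⟨px, hpx, hpxS⟩ := exists_walk_support_bfsParent_iterate
    (Reachable.of_dist_ne_zero (by omega : G.dist v x ≠ 0))
  obtain ⟨py, hpy, hpyS⟩ := exists_walk_support_bfsParent_iterate
    (Reachable.of_dist_ne_zero (by omega : G.dist v y ≠ 0))
  have hpyP := py.isPath_of_length_eq_dist hpy
  have hpS' : ∀ z ∈ p.support.tail, G.dist v z = n + 1 := fun z hz =>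
    hpS z (List.mem_of_mem_tail hz)
  refine ⟨(px.append p).append py.reverse,
    (hp.append_of_length_eq_dist hpx (by rwa [hx])).isCycle_append hpyP.reverse ?_ ?_, ?_⟩
  · intro a ha hb
    rw [Walk.mem_tail_support_append_iff] at ha
    have hay : a ≠ y := by
      rintro rfl
      exact hpyP.reverse.start_notMem_support_tail hb
    rw [Walk.support_reverse] at hb
    rcases hpyS a (List.mem_reverse.mp (List.mem_of_mem_tail hb)) with rfl | ⟨k, hk, rfl⟩
    · rcases ha with ha | ha
      · exact (px.isPath_of_length_eq_dist hpx).start_notMem_support_tail ha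
      · simpa using hpS' _ ha
    have hyk := dist_bfsParent_iterate hk.le
    rcases ha with ha | ha
    · rcases hpxS _ (List.mem_of_mem_tail ha) with hkv | ⟨k', hk', hkk'⟩
      · rw [hkv, dist_self] at hyk
        omega
      · have hxk' := dist_bfsParent_iterate hk'.le
        rw [← hkk', hyk, hx, hy] at hxk'
        obtain rfl : k = k' := by omega
        exact hxy (Function.iterate_eq_iterate_of_le hkk'.symm (by omega))
    · have hk0 : k ≠ 0 := by
        rintro rfl
        exact hay rfl
      have := hpS' _ ha
      omega
  · rcases Nat.eq_zero_or_pos p.length with h | h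
    · obtain rfl := Walk.eq_of_length_eq_zero h
      exact absurd rfl hxy
    · simp only [Walk.length_append, hpx, hx]
      omega
  · simp only [Walk.length_append, Walk.length_reverse, hpx, hpy, hx, hy]
    omega

section MinDegree

variable [DecidableRel G.Adj] {S : Finset V} {D t : ℕ}

theorem exists_isPath_of_le_degree (hdeg : ∀ x ∈ S, D ≤ #{y ∈ S | G.Adj x y}) :
    ∀ (m : ℕ) (A : Finset V) (x : V), x ∈ S → x ∉ A → m + #A ≤ D →
      ∃ (e : V) (p : G.Walk x e), p.IsPath ∧ p.length = m ∧ ∀ z ∈ p.support, z ∈ S ∧ z ∉ A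
  | 0, _, x, hx, hxA, _ => ⟨x, .nil, .nil, rfl, by simpa using ⟨hx, hxA⟩⟩
  | m + 1, A, x, hx, hxA, hm => by
    classical
    obtain ⟨y, hy, hyA⟩ := exists_mem_notMem_of_card_lt_card (s := A)
      (t := {y ∈ S | G.Adj x y}) (by have := hdeg x hx; omega)
    rw [mem_filter] at hy
    obtain ⟨e, p, hp, hlen, hpS⟩ :=
      exists_isPath_of_le_degree hdeg m (insert x A) y hy.1 (by simp [hy.2.ne', hyA])
        (by rw [card_insert_of_notMem hxA]; omega)
    refine ⟨e, .cons hy.2 p, ?_, by simp [hlen], ?_⟩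
    · exact hp.cons fun h => (hpS x h).2 (mem_insert_self x A)
    · simp only [Walk.support_cons, List.mem_cons, forall_eq_or_imp]
      exact ⟨⟨hx, hxA⟩, fun z hz => ⟨(hpS z hz).1, fun h => (hpS z hz).2 (mem_insert_of_mem h)⟩⟩

variable {α : Type*} {π : V → α}

theorem eq_of_adj_of_adj_of_le_degree (hdeg : ∀ x ∈ S, D ≤ #{y ∈ S | G.Adj x y})
    (ht : 0 < t) (htD : t + 1 ≤ D)
    (hπ : ∀ a b (p : G.Walk a b), p.IsPath → (∀ z ∈ p.support, z ∈ S) → p.length = t → π a = π b)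
    (hu : u ∈ S) (hw : w ∈ S) (hz : z ∈ S) (huw : G.Adj u w) (hwz : G.Adj w z) : π u = π z := by
  classical
  obtain ⟨e, q, hq, hlen, hqS⟩ := exists_isPath_of_le_degree hdeg (t - 1) {u, z} w hw
    (by simp [huw.ne', hwz.ne]) (by have := card_le_two (a := u) (b := z); omega)
  -- both `u` and `z` extend `q` to a path of length `t` ending at `e`
  have key : ∀ a ∈ ({u, z} : Finset V), a ∈ S → G.Adj a w → π a = π e := by
    intro a ha haS haw
    refine hπ a e (.cons haw q) (hq.cons fun h => (hqS a h).2 ha) ?_ (by simp [hlen]; omega)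
    simp only [Walk.support_cons, List.mem_cons, forall_eq_or_imp]
    exact ⟨haS, fun z hz => (hqS z hz).1⟩
  rw [key u (by simp) hu huw, key z (by simp) hz hwz.symm]

theorem eq_of_even_length_of_le_degree (hdeg : ∀ x ∈ S, D ≤ #{y ∈ S | G.Adj x y})
    (ht : 0 < t) (htD : t + 1 ≤ D)
    (hπ : ∀ a b (p : G.Walk a b), p.IsPath → (∀ z ∈ p.support, z ∈ S) → p.length = t → π a = π b) :
    ∀ {a b : V} (q : G.Walk a b), (∀ z ∈ q.support, z ∈ S) → Even q.length → π a = π b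
  | _, _, .nil, _, _ => rfl
  | _, _, .cons _ .nil, _, hq => absurd hq (by simp)
  | _, _, .cons h (.cons h' q), hqS, hq => by
    simp only [Walk.support_cons, List.mem_cons, forall_eq_or_imp] at hqS
    refine (eq_of_adj_of_adj_of_le_degree hdeg ht htD hπ hqS.1 hqS.2.1
      (hqS.2.2 _ q.start_mem_support) h h').trans ?_
    exact eq_of_even_length_of_le_degree hdeg ht htD hπ q hqS.2.2
      (by simpa [Walk.length_cons, Nat.even_add_one] using hq)

theorem eq_of_adj_of_le_degree (hdeg : ∀ x ∈ S, D ≤ #{y ∈ S | G.Adj x y})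
    (ht : Odd t) (htD : t + 1 ≤ D)
    (hπ : ∀ a b (p : G.Walk a b), p.IsPath → (∀ z ∈ p.support, z ∈ S) → p.length = t → π a = π b)
    (hx : x ∈ S) (hy : y ∈ S) (hxy : G.Adj x y) : π x = π y := by
  obtain ⟨e, q, hq, hlen, hqS⟩ :=
    exists_isPath_of_le_degree hdeg t ∅ x hx (by simp) (by simp; omega)
  have hqS' : ∀ z ∈ q.support, z ∈ S := fun z hz => (hqS z hz).1
  calc π x = π e := hπ x e q hq hqS' hlen
    _ = π y := by
      refine (eq_of_even_length_of_le_degree hdeg ht.pos htD hπ (.cons hxy.symm q) ?_ ?_).symm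
      · simpa using ⟨hy, hqS'⟩
      · simpa [hlen] using ht.add_one

end MinDegree

section OddCycleFree

variable {ℓ : ℕ} {S : Finset V}

theorem bfsParent_iterate_eq_of_isPath
    (hcyc : ∀ (v : V) (p : G.Walk v v), p.IsCycle → p.length ≠ 2 * ℓ + 1) (hnℓ : n + 1 ≤ ℓ)
    (hS : ∀ x ∈ S, G.dist v x = n + 1) (p : G.Walk x y) (hp : p.IsPath)
    (hpS : ∀ z ∈ p.support, z ∈ S) (hlen : p.length = 2 * (ℓ - (n + 1)) + 1) :
    (G.bfsParent v)^[n] x = (G.bfsParent v)^[n] y := by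
  by_contra hxy
  obtain ⟨c, hc, hclen⟩ := exists_isCycle_of_isPath_of_dist_eq
    (hS x (hpS x p.start_mem_support)) (hS y (hpS y p.end_mem_support)) hxy p hp
    (fun z hz => hS z (hpS z hz))
  exact hcyc v c hc (by omega)

theorem eq_empty_of_forall_dist_eq_of_le_degree [DecidableRel G.Adj]
    (hcyc : ∀ (v : V) (p : G.Walk v v), p.IsCycle → p.length ≠ 2 * ℓ + 1) (hnℓ : n + 1 ≤ ℓ)
    (hS : ∀ x ∈ S, G.dist v x = n + 1) (hdeg : ∀ x ∈ S, 2 * ℓ - 1 ≤ #{y ∈ S | G.Adj x y}) :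
    S = ∅ := by
  classical
  induction n generalizing v S with
  | zero =>
    by_contra hne
    obtain ⟨x, hx⟩ := nonempty_of_ne_empty hne
    obtain ⟨e, p, hp, hlen, hpS⟩ :=
      exists_isPath_of_le_degree hdeg (2 * ℓ - 1) ∅ x hx (by simp) (by simp)
    obtain rfl : x = e := bfsParent_iterate_eq_of_isPath hcyc hnℓ hS p hp
      (fun z hz => (hpS z hz).1) (by omega)
    have := (Walk.isPath_iff_nil.mp hp).length_eq_zero
    omega
  | succ n ih =>
    by_contra hne
    obtain ⟨x₀, hx₀⟩ := nonempty_of_ne_empty hne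
    set π := (G.bfsParent v)^[n + 1]
    have hπ : ∀ x ∈ S, ∀ y ∈ S, G.Adj x y → π x = π y := fun x hx y hy hxy =>
      eq_of_adj_of_le_degree hdeg (odd_two_mul_add_one _) (by omega)
        (fun _ _ p hp hpS hlen => bfsParent_iterate_eq_of_isPath hcyc hnℓ hS p hp hpS hlen)
        hx hy hxy
    set S' : Finset V := {x ∈ S | π x = π x₀}
    have hS' : ∀ x ∈ S', G.dist (π x₀) x = n + 1 := by
      intro x hx
      rw [mem_filter] at hx
      rw [← hx.2]
      exact dist_bfsParent_iterate_of_dist_eq_succ (hS x hx.1)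
    have hdeg' : ∀ x ∈ S', 2 * ℓ - 1 ≤ #{y ∈ S' | G.Adj x y} := by
      intro x hx
      rw [mem_filter] at hx
      refine (hdeg x hx.1).trans (card_le_card fun y hy => ?_)
      simp only [S', mem_filter] at hy ⊢
      exact ⟨⟨hy.1, (hπ x hx.1 y hy.1 hy.2).symm.trans hx.2⟩, hy.2⟩
    have hx₀' : x₀ ∈ S' := mem_filter.mpr ⟨hx₀, rfl⟩
    rw [ih (by omega) hS' hdeg'] at hx₀'
    exact notMem_empty x₀ hx₀'

end OddCycleFree

theorem exists_fin_coloring_of_exists_degree_lt [DecidableRel G.Adj] {D : ℕ} (hD : 0 < D)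
    (T : Finset V) (hT : ∀ U ⊆ T, U.Nonempty → ∃ x ∈ U, #{y ∈ U | G.Adj x y} < D) :
    ∃ f : V → Fin D, ∀ x ∈ T, ∀ y ∈ T, G.Adj x y → f x ≠ f y := by
  classical
  induction T using Finset.strongInduction with
  | H T ih =>
    rcases T.eq_empty_or_nonempty with rfl | hne
    · exact ⟨fun _ => ⟨0, hD⟩, by simp⟩
    obtain ⟨x, hx, hxD⟩ := hT T subset_rfl hne
    obtain ⟨f, hf⟩ := ih (T.erase x) (erase_ssubset hx)
      fun U hU => hT U (hU.trans (erase_subset x T))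
    obtain ⟨c, -, hc⟩ := exists_mem_notMem_of_card_lt_card (s := {y ∈ T | G.Adj x y}.image f)
      (t := univ) (card_image_le.trans_lt (by simpa using hxD))
    have hfc : ∀ y ∈ T, G.Adj x y → Function.update f x c y ≠ Function.update f x c x := by
      intro y hy hxy
      rw [Function.update_self, Function.update_of_ne hxy.ne']
      exact fun h => hc (mem_image.mpr ⟨y, mem_filter.mpr ⟨hy, hxy⟩, h⟩)
    refine ⟨Function.update f x c, fun a ha b hb hab => ?_⟩
    obtain rfl | hax := eq_or_ne a x
    · exact (hfc b hb hab).symm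
    obtain rfl | hbx := eq_or_ne b x
    · exact hfc a ha hab.symm
    rw [Function.update_of_ne hax, Function.update_of_ne hbx]
    exact hf a (mem_erase.mpr ⟨hax, ha⟩) b (mem_erase.mpr ⟨hbx, hb⟩) hab

theorem colorable_induce_of_forall_finset {P : Set V} {D : ℕ}
    (h : ∀ T : Finset V, ↑T ⊆ P → ∃ f : V → Fin D, ∀ x ∈ T, ∀ y ∈ T, G.Adj x y → f x ≠ f y) :
    (G.induce P).Colorable D := by
  choose f hf using h
  refine nonempty_hom_of_forall_finite_subgraph_hom fun H hH => ?_
  have hHP : ↑(hH.image Subtype.val).toFinset ⊆ P := by simp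
  refine ⟨fun a => f _ hHP a.1.1, fun {a b} hab => ?_⟩
  exact hf _ hHP _ (by simp [a.2]) _ (by simp [b.2]) (H.adj_sub hab)

end SimpleGraph

theorem chrom_of_distance_layer_general {V : Type*} (G : SimpleGraph V) (ℓ : ℕ)
    (hcyc : ∀ (v : V) (p : G.Walk v v), p.IsCycle → p.length ≠ 2 * ℓ + 1)
    (v : V) (i : ℕ) (hi : 1 ≤ i) (hiℓ : i ≤ ℓ) :
    (G.induce {u | G.Reachable v u ∧ G.dist v u = i}).chromaticNumber
      ≤ ((2 * ℓ - 1 : ℕ) : ℕ∞) := by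
  classical
  obtain ⟨n, rfl⟩ : ∃ n, i = n + 1 := ⟨i - 1, by omega⟩
  refine Colorable.chromaticNumber_le (colorable_induce_of_forall_finset fun T hT => ?_)
  refine exists_fin_coloring_of_exists_degree_lt (by omega) T fun U hU hne => ?_
  by_contra! hdeg
  exact hne.ne_empty (eq_empty_of_forall_dist_eq_of_le_degree hcyc hiℓ
    (fun x hx => (hT (hU hx)).2) hdeg)

/-- If `G` contains no cycle of length `2ℓ+1`, then for every vertex `v` and every
`i ∈ {1, …, ℓ}`, the subgraph induced on the set of vertices at distance exactly `i`
from `v` has chromatic number at most `2ℓ-1`. -/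
theorem chrom_of_distance_layer {V : Type*} (G : SimpleGraph V) (ℓ : ℕ) (hℓ : 1 ≤ ℓ)
    (hcyc : ∀ (v : V) (p : G.Walk v v), p.IsCycle → p.length ≠ 2 * ℓ + 1)
    (v : V) (i : ℕ) (hi : 1 ≤ i) (hiℓ : i ≤ ℓ) :
    (G.induce {u | G.Reachable v u ∧ G.dist v u = i}).chromaticNumber
      ≤ ((2 * ℓ - 1 : ℕ) : ℕ∞) :=
  chrom_of_distance_layer_general G ℓ hcyc v i hi hiℓ
end

section
/- Let G be a graph with no odd cycle of length at most 2ℓ+1, and let v be a vertex of G. Then the subgraph of G induced on the set of vertices at distance at most ℓ from v is bipartite. -/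
open SimpleGraph

/-!
Colour each vertex of the ball by the parity of its distance from `v`. An edge `ab` joining two
vertices of the same colour closes up, with shortest paths from `v` to `a` and to `b`, into a closed
walk of odd length `d(v,a) + d(v,b) + 1 ≤ 2ℓ + 1`, and an odd closed walk contains an odd cycle
that is no longer: shortcutting at a repeated vertex splits it into two shorter closed walks, one of
which has odd length.
-/

namespace SimpleGraph

variable {V : Type*} {G : SimpleGraph V}

namespace Walk

/-- Shortcutting `p` at a repeated vertex: `c` is the closed detour, `r` the walk without it. -/
lemma exists_loop_of_not_isPath [DecidableEq V] {u v : V} (p : G.Walk u v) (hp : ¬p.IsPath) :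
    ∃ (x : V) (c : G.Walk x x) (r : G.Walk u v),
      0 < c.length ∧ c.length + r.length = p.length := by
  induction p with
  | nil => exact absurd IsPath.nil hp
  | @cons u w v h q ih =>
    by_cases hu : u ∈ q.support
    · refine ⟨u, cons h (q.takeUntil u hu), q.dropUntil u hu, by simp, ?_⟩
      have := congrArg length (q.take_spec hu)
      rw [length_append] at this
      simp only [length_cons]
      omega
    · have hq : ¬q.IsPath := fun hq ↦ hp ((cons_isPath_iff h q).2 ⟨hq, hu⟩)
      obtain ⟨x, c, r, hc, hlen⟩ := ih hq
      exact ⟨x, c, cons h r, hc, by simp only [length_cons]; omega⟩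

lemma exists_isCycle_odd_length_le {u : V} (p : G.Walk u u) (hp : Odd p.length) :
    ∃ (x : V) (c : G.Walk x x), c.IsCycle ∧ Odd c.length ∧ c.length ≤ p.length := by
  classical
  induction hn : p.length using Nat.strong_induction_on generalizing u with
  | _ n ih =>
  subst hn
  cases p with
  | nil => simp at hp
  | @cons _ w _ h q =>
    by_cases hq : q.IsPath
    · have hq0 : q.length ≠ 0 := fun h0 ↦ h.ne (q.eq_of_length_eq_zero h0).symm
      obtain ⟨k, hk⟩ := hp
      refine ⟨u, cons h q, isCycle_iff_isPath_tail_and_le_length.2 ⟨?_, ?_⟩, ⟨k, hk⟩,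
        le_rfl⟩
      · simpa [tail_cons] using hq
      · simp only [length_cons] at hk ⊢; omega
    · obtain ⟨x, c, r, hc, hlen⟩ := q.exists_loop_of_not_isPath hq
      have hsum : c.length + (cons h r).length = (cons h q).length := by
        simp only [length_cons]; omega
      rcases Nat.even_or_odd c.length with heven | hodd
      · have hodd' : Odd (cons h r).length := by
          rw [← hsum] at hp
          exact (Nat.odd_add'.1 hp).2 heven
        obtain ⟨y, d, hd, hdo, hdl⟩ := ih _ (by omega) (cons h r) hodd' rfl
        exact ⟨y, d, hd, hdo, by omega⟩
      · have hshorter : c.length < (cons h q).length := by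
          simp only [length_cons] at hsum ⊢; omega
        obtain ⟨y, d, hd, hdo, hdl⟩ := ih _ hshorter c hodd rfl
        exact ⟨y, d, hd, hdo, by omega⟩

end Walk

lemma exists_walk_length_eq_dist_add_dist_of_adj {v a b : V} (ha : G.Reachable v a)
    (hb : G.Reachable v b) (hab : G.Adj a b) :
    ∃ w : G.Walk v v, w.length = G.dist v a + 1 + G.dist v b := by
  obtain ⟨qa, hqa⟩ := ha.exists_walk_length_eq_dist
  obtain ⟨qb, hqb⟩ := hb.exists_walk_length_eq_dist
  refine ⟨qa.append (Walk.cons hab qb.reverse), ?_⟩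
  simp only [Walk.length_append, Walk.length_cons, Walk.length_reverse, hqa, hqb]
  omega

end SimpleGraph

theorem ball_bipartite_general {V : Type*} (G : SimpleGraph V) (ℓ : ℕ)
    (hcyc : ∀ (u : V) (p : G.Walk u u), p.IsCycle → Odd p.length → 2 * ℓ + 1 < p.length)
    (v : V) :
    (G.induce {u | ∃ p : G.Walk v u, p.length ≤ ℓ}).Colorable 2 := by
  let parity : (G.induce {u | ∃ p : G.Walk v u, p.length ≤ ℓ}).Coloring (ZMod 2) :=
    Coloring.mk (fun u ↦ (G.dist v u : ZMod 2)) <| by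
      rintro ⟨a, pa, hpa⟩ ⟨b, pb, hpb⟩ hab hcol
      obtain ⟨w, hw⟩ := exists_walk_length_eq_dist_add_dist_of_adj ⟨pa⟩ ⟨pb⟩ hab
      have hmod : G.dist v a % 2 = G.dist v b % 2 := (ZMod.natCast_eq_natCast_iff' _ _ 2).1 hcol
      have hodd : Odd w.length := by rw [hw, Nat.odd_iff]; omega
      obtain ⟨x, c, hc, hco, hcl⟩ := w.exists_isCycle_odd_length_le hodd
      have hlong := hcyc x c hc hco
      have hda := G.dist_le pa
      have hdb := G.dist_le pb
      omega
  simpa using parity.colorable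

/-- If `G` has no odd cycle of length at most `2ℓ+1`, then the subgraph induced on the
set of vertices at distance at most `ℓ` from `v` is bipartite (2-colourable). -/
theorem ball_bipartite {V : Type*} (G : SimpleGraph V) (ℓ : ℕ) (hℓ : 1 ≤ ℓ)
    (hcyc : ∀ (u : V) (p : G.Walk u u), p.IsCycle → Odd p.length → 2 * ℓ + 1 < p.length)
    (v : V) :
    (G.induce {u | ∃ p : G.Walk v u, p.length ≤ ℓ}).Colorable 2 :=
  ball_bipartite_general G ℓ hcyc v
end
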